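/- For every integer n ≥ 1 the polynomial identity P_0(x;q) + Σ_{k=1}^{n} (−1)^k·√([2k−2]!!/[2k−1]!!)·x·P_{2k−1}(x;q) = (−1)^n·√([2n]!!/[2n−1]!!)·P_{2n}(x;q) holds. -/

import Mathlib

open Polynomial Filter

/-- The symmetric q-number `[n] = (q^n - q^{-n})/(q - q⁻¹)`. -/
noncomputable def qnum (q : ℝ) (n : ℕ) : ℝ := (q ^ (n : ℤ) - q ^ (-(n : ℤ))) / (q - q⁻¹)

/-- The q-factorial `[n]! = [1][2]⋯[n]`. -/
noncomputable def qfact (q : ℝ) : ℕ → ℝ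
  | 0 => 1
  | n + 1 => qfact q n * qnum q (n + 1)

/-- The even q-double factorial: `evenDF q n = [2n]!! = [2n][2n-2]⋯[2]`. -/
noncomputable def evenDF (q : ℝ) : ℕ → ℝ
  | 0 => 1
  | n + 1 => qnum q (2 * (n + 1)) * evenDF q n

/-- The odd q-double factorial: `oddDF q n = [2n-1]!! = [2n-1][2n-3]⋯[1]`. -/
noncomputable def oddDF (q : ℝ) : ℕ → ℝ
  | 0 => 1
  | n + 1 => qnum q (2 * n + 1) * oddDF q n

/-- `alphaC q m n = α_{2m-1;n}`, with `α_{-1;n} = 1` and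
`α_{2m-1;n} = Σ_{k=2m-1}^{n} [k]·α_{2m-3;k-2}`. -/
noncomputable def alphaC (q : ℝ) : ℕ → ℕ → ℝ
  | 0, _ => 1
  | m + 1, n => ∑ k ∈ Finset.Icc (2 * m + 1) n, qnum q k * alphaC q m (k - 2)

/-- `betaC q m n = β_{2m;n}`, with `β_{0;n} = 1` and
`β_{2m;n} = Σ_{k=2m}^{n} [k]·β_{2m-2;k-2}`. -/
noncomputable def betaC (q : ℝ) : ℕ → ℕ → ℝ
  | 0, _ => 1
  | m + 1, n => ∑ k ∈ Finset.Icc (2 * m + 2) n, qnum q k * betaC q m (k - 2)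

lemma qnum_inv (q : ℝ) (n : ℕ) : qnum q⁻¹ n = qnum q n := by
  rw [qnum, qnum, inv_inv, inv_zpow', inv_zpow', neg_neg,
    ← neg_sub (q ^ (n:ℤ)), ← neg_sub q, neg_div_neg_eq]

lemma qnum_pos (q : ℝ) (hq : 0 < q) (hq1 : q ≠ 1) (n : ℕ) (hn : 1 ≤ n) :
    0 < qnum q n := by
  have key : ∀ p : ℝ, 1 < p → 0 < qnum p n := by
    intro p hp
    apply div_pos
    · have := zpow_lt_zpow_right₀ hp (show -(n:ℤ) < n by omega)
      linarith
    · have : p⁻¹ < 1 := inv_lt_one_of_one_lt₀ hp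
      linarith
  rcases lt_or_gt_of_ne hq1 with h | h
  · rw [← qnum_inv]
    exact key _ ((one_lt_inv₀ hq).mpr h)
  · exact key q h

lemma qnum_one (q : ℝ) (hq : 0 < q) (hq1 : q ≠ 1) : qnum q 1 = 1 := by
  have hne : q - q⁻¹ ≠ 0 := by
    intro h
    have hqq : q = q⁻¹ := by linarith
    have h2 : q * q = 1 := by
      field_simp at hqq ⊢
      nlinarith [hqq]
    have h3 : (q - 1) * (q + 1) = 0 := by ring_nf; linarith
    rcases mul_eq_zero.1 h3 with h' | h'
    · exact hq1 (by linarith)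
    · linarith
  simp only [qnum, Nat.cast_one, zpow_one, zpow_neg_one]
  exact div_self hne

/-- For every `n ≥ 1`,
`P_0(x) + Σ_{k=1}^{n} (−1)^k·√([2k-2]!!/[2k-1]!!)·x·P_{2k-1}(x)
  = (−1)^n·√([2n]!!/[2n-1]!!)·P_{2n}(x)` as polynomials. -/
theorem stmt18 (q : ℝ) (hq : 0 < q) (hq1 : q ≠ 1)
    (P : ℕ → Polynomial ℝ)
    (hP0 : P 0 = 1) (hP1 : P 1 = X)
    (hPrec : ∀ n : ℕ, 1 ≤ n →
      Real.sqrt (qnum q n) • P (n - 1) + Real.sqrt (qnum q (n + 1)) • P (n + 1) = X * P n)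
    (n : ℕ) (hn : 1 ≤ n) :
    P 0 + ∑ k ∈ Finset.Icc 1 n,
        ((-1 : ℝ) ^ k * Real.sqrt (evenDF q (k - 1) / oddDF q k)) • (X * P (2 * k - 1))
      = ((-1 : ℝ) ^ n * Real.sqrt (evenDF q n / oddDF q n)) • P (2 * n) := by
  have hod : ∀ m, 0 < oddDF q m := by
    intro m
    induction m with
    | zero => simp [oddDF]
    | succ k ih => exact mul_pos (qnum_pos q hq hq1 _ (by omega)) ih
  have hev : ∀ m, 0 < evenDF q m := by
    intro m
    induction m with
    | zero => simp [evenDF]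
    | succ k ih => exact mul_pos (qnum_pos q hq hq1 _ (by omega)) ih
  induction n, hn using Nat.le_induction with
  | base =>
    rw [Finset.Icc_self, Finset.sum_singleton]
    have h1 : qnum q 1 = 1 := qnum_one q hq hq1
    have e1 : evenDF q 1 = qnum q 2 := by
      show qnum q (2 * (0 + 1)) * evenDF q 0 = qnum q 2
      norm_num [evenDF]
    have o1 : oddDF q 1 = 1 := by
      show qnum q (2 * 0 + 1) * oddDF q 0 = 1
      norm_num [oddDF, h1]
    have h01 : evenDF q 0 = 1 := rfl
    norm_num [h01, o1, e1]
    rw [← hPrec 1 le_rfl]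
    norm_num [h1]
  | succ n hn ih =>
    rw [Finset.sum_Icc_succ_top (by omega : 1 ≤ n + 1), ← add_assoc, ih]
    set a := qnum q (2 * n + 1) with ha_def
    set b := qnum q (2 * n + 2) with hb_def
    set E := evenDF q n with hE_def
    set O := oddDF q n with hO_def
    have ha : 0 < a := qnum_pos q hq hq1 _ (by omega)
    have hb : 0 < b := qnum_pos q hq hq1 _ (by omega)
    have hE : 0 < E := hev n
    have hO : 0 < O := hod n
    have oS : oddDF q (n + 1) = a * O := rfl
    have eS : evenDF q (n + 1) = b * E := by
      show qnum q (2 * (n + 1)) * evenDF q n = b * E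
      rw [show 2 * (n + 1) = 2 * n + 2 by ring]
    have hidx1 : 2 * (n + 1) - 1 = 2 * n + 1 := by omega
    have hidx2 : 2 * (n + 1) = 2 * n + 2 := by omega
    have hidx3 : n + 1 - 1 = n := rfl
    rw [hidx1, hidx2, hidx3, ← hPrec (2 * n + 1) (by omega), oS, eS]
    have hidx4 : 2 * n + 1 - 1 = 2 * n := rfl
    rw [hidx4]
    have hA : Real.sqrt (E / (a * O)) * Real.sqrt a = Real.sqrt (E / O) := by
      rw [← Real.sqrt_mul (by positivity)]
      congr 1
      field_simp
    have hB : Real.sqrt (E / (a * O)) * Real.sqrt b = Real.sqrt (b * E / (a * O)) := by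
      rw [← Real.sqrt_mul (by positivity)]
      congr 1
      ring
    rw [smul_add, smul_smul, smul_smul]
    have c1 : (-1 : ℝ) ^ (n + 1) * Real.sqrt (E / (a * O)) * Real.sqrt a
        = -((-1) ^ n * Real.sqrt (E / O)) := by
      rw [mul_assoc, hA, pow_succ]; ring
    have c2 : (-1 : ℝ) ^ (n + 1) * Real.sqrt (E / (a * O)) * Real.sqrt b
        = (-1) ^ (n + 1) * Real.sqrt (b * E / (a * O)) := by
      rw [mul_assoc, hB]
    rw [c1, c2, neg_smul]
    abel
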